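/- Let X be a martingale with X(r) measurable w.r.t. 𝓕_r, let z* ∈ ℝ, and let A = {X(t) = z*} ∈ 𝓕_t. Set V_r = E[(X(t) − z*)² | 𝓕_r] and P_r = P(A | 𝓕_r). Then (X(r) − z*)² ≤ V_r·(1 − P_r) almost surely. -/

import Mathlib

/-!
With `Y = X(t) - z*` and `Z = 1 - 𝟙_A` we have `Y * Z = Y` and `Z ^ 2 = Z`, so the claim is the
conditional Cauchy–Schwarz inequality `E[Y Z | 𝓕_r]² ≤ E[Y² | 𝓕_r] E[Z² | 𝓕_r]`.
That inequality follows by conditioning `2 q Y Z ≤ q² Y² + Z²` for every rational `q`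
(countably many null sets), and reading the result as a nonnegative quadratic in `q`.
-/

open MeasureTheory Filter

lemma sq_le_mul_of_forall_rat {a b c : ℝ} (h : ∀ q : ℚ, 2 * q * b ≤ q ^ 2 * a + c) :
    b ^ 2 ≤ a * c := by
  have hreal : ∀ x : ℝ, 0 ≤ a * (x * x) + (-2 * b) * x + c := fun x ↦
    Rat.denseRange_cast.induction_on x
      (isClosed_le continuous_const (by fun_prop)) fun q ↦ by nlinarith [h q]
  have hdiscrim := discrim_le_zero hreal
  rw [discrim] at hdiscrim
  linarith

section CondExp

variable {Ω : Type*} {m mΩ : MeasurableSpace Ω} {μ : Measure Ω}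

lemma ae_two_mul_condExp_mul_le {Y Z : Ω → ℝ} (hY : MemLp Y 2 μ) (hZ : MemLp Z 2 μ) (x : ℝ) :
    ∀ᵐ ω ∂μ, 2 * x * μ[Y * Z | m] ω ≤ x ^ 2 * μ[Y ^ 2 | m] ω + μ[Z ^ 2 | m] ω := by
  have hYZ : Integrable (Y * Z) μ := hY.integrable_mul hZ
  have hY2 : Integrable (Y ^ 2) μ := hY.integrable_sq
  have hZ2 : Integrable (Z ^ 2) μ := hZ.integrable_sq
  have hmono : μ[(2 * x) • (Y * Z) | m] ≤ᵐ[μ] μ[x ^ 2 • Y ^ 2 + Z ^ 2 | m] :=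
    condExp_mono (hYZ.smul _) ((hY2.smul _).add hZ2)
      (ae_of_all _ fun ω ↦ by simpa [mul_assoc, mul_pow] using two_mul_le_add_sq (x * Y ω) (Z ω))
  filter_upwards [hmono, condExp_smul (2 * x) (Y * Z) m, condExp_smul (x ^ 2) (Y ^ 2) m,
    condExp_add (hY2.smul (x ^ 2)) hZ2 m] with ω h hl hr hadd
  simpa [hl, hr, hadd, mul_assoc] using h

lemma ae_sq_condExp_mul_le {Y Z : Ω → ℝ} (hY : MemLp Y 2 μ) (hZ : MemLp Z 2 μ) :
    ∀ᵐ ω ∂μ, μ[Y * Z | m] ω ^ 2 ≤ μ[Y ^ 2 | m] ω * μ[Z ^ 2 | m] ω := by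
  have h : ∀ᵐ ω ∂μ, ∀ q : ℚ, 2 * q * μ[Y * Z | m] ω ≤ q ^ 2 * μ[Y ^ 2 | m] ω + μ[Z ^ 2 | m] ω :=
    ae_all_iff.2 fun q ↦ ae_two_mul_condExp_mul_le hY hZ q
  filter_upwards [h] with ω hω
  exact sq_le_mul_of_forall_rat hω

lemma memLp_indicator_setOf_eq [IsFiniteMeasure μ] {X : Ω → ℝ} (hX : AEMeasurable X μ) (z : ℝ)
    (p : ENNReal) : MemLp (Set.indicator {ω | X ω = z} fun _ ↦ (1 : ℝ)) p μ := by
  have hmeas : Measurable (Set.indicator {z} fun _ : ℝ ↦ (1 : ℝ)) :=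
    measurable_const.indicator (measurableSet_singleton z)
  refine MemLp.of_bound (hmeas.comp_aemeasurable hX).aestronglyMeasurable 1
    (ae_of_all _ fun ω ↦ ?_)
  by_cases h : X ω = z <;> simp [h]

end CondExp

theorem stmt_9 {Ω : Type*} {mΩ : MeasurableSpace Ω} (μ : Measure Ω) [IsProbabilityMeasure μ]
    (m : MeasurableSpace Ω) (hm : m ≤ mΩ) (Xt Xr : Ω → ℝ) (z : ℝ)
    (hL2 : MemLp Xt 2 μ)
    (hmart : Xr =ᵐ[μ] μ[Xt | m]) :
    ∀ᵐ ω ∂μ, (Xr ω - z) ^ 2 ≤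
      (μ[fun ω' => (Xt ω' - z) ^ 2 | m]) ω *
        (1 - (μ[Set.indicator {ω' | Xt ω' = z} (fun _ => (1:ℝ)) | m]) ω) := by
  set indA : Ω → ℝ := Set.indicator {ω' | Xt ω' = z} fun _ ↦ 1
  set Y : Ω → ℝ := fun ω ↦ Xt ω - z
  set Z : Ω → ℝ := fun ω ↦ 1 - indA ω
  have hY : MemLp Y 2 μ := hL2.sub (memLp_const z)
  have hindA : MemLp indA 2 μ := memLp_indicator_setOf_eq hL2.1.aemeasurable z 2
  have hZ : MemLp Z 2 μ := (memLp_const 1).sub hindA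
  have hYZ : Y * Z = Y := by
    ext ω
    by_cases h : Xt ω = z <;> simp [Y, Z, indA, h]
  have hZ2 : Z ^ 2 = Z := by
    ext ω
    by_cases h : Xt ω = z <;> simp [Z, indA, h]
  have hXr : ∀ᵐ ω ∂μ, Xr ω - z = μ[Y | m] ω := by
    filter_upwards [hmart, condExp_sub (hL2.integrable one_le_two) (integrable_const z) m]
      with ω h hsub
    simp [Y, ← Pi.sub_def, hsub, condExp_const hm, h]
  have hZcond : ∀ᵐ ω ∂μ, μ[Z | m] ω = 1 - μ[indA | m] ω := by
    filter_upwards [condExp_sub (integrable_const 1) (hindA.integrable one_le_two) m] with ω hsub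
    simp [Z, ← Pi.sub_def, hsub, condExp_const hm]
  filter_upwards [ae_sq_condExp_mul_le (m := m) hY hZ, hXr, hZcond] with ω hCS hω hZω
  rw [hYZ, hZ2] at hCS
  rw [hω, ← hZω]
  exact hCS
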